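/- Let ν > -1/2. For every k ≥ 1 and every smooth f : (0,∞) → ℝ, δ_ν^k f = δ_{ν+1}^k f + (k/x) δ_{ν+1}^{k-1} f, where δ_α = d/dx + x - (α+1/2)/x. Equivalently, (δ_{ν+1} + 1/x)^k = δ_{ν+1}^k + (k/x) δ_{ν+1}^{k-1} as operators on smooth functions on (0,∞). -/

import Mathlib

open Real Set

/-- The Laguerre derivative `δ_α f(x) = f'(x) + x f(x) - ((α+1/2)/x) f(x)`. -/
noncomputable def deltaOp (α : ℝ) (f : ℝ → ℝ) : ℝ → ℝ :=
  fun x => deriv f x + x * f x - ((α + 1 / 2) / x) * f x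

lemma deltaSmooth (α : ℝ) {g : ℝ → ℝ} (hg : ContDiffOn ℝ (⊤ : ℕ∞) g (Set.Ioi 0)) :
    ContDiffOn ℝ (⊤ : ℕ∞) (deltaOp α g) (Set.Ioi 0) := by
  have hd : ContDiffOn ℝ (⊤ : ℕ∞) (deriv g) (Set.Ioi 0) :=
    hg.deriv_of_isOpen isOpen_Ioi (by simp)
  exact (hd.add (contDiffOn_id.mul hg)).sub
    ((contDiffOn_const.div contDiffOn_id (fun x hx => ne_of_gt hx)).mul hg)

lemma iterSmooth (α : ℝ) {f : ℝ → ℝ} (hf : ContDiffOn ℝ (⊤ : ℕ∞) f (Set.Ioi 0)) (n : ℕ) :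
    ContDiffOn ℝ (⊤ : ℕ∞) ((deltaOp α)^[n] f) (Set.Ioi 0) := by
  induction n with
  | zero => exact hf
  | succ n ih => rw [Function.iterate_succ_apply']; exact deltaSmooth α ih

lemma key (ν : ℝ) (f : ℝ → ℝ) (hf : ContDiffOn ℝ (⊤ : ℕ∞) f (Set.Ioi 0)) (n : ℕ) :
    ∀ x ∈ Set.Ioi (0:ℝ),
      (deltaOp ν)^[n+1] f x =
        (deltaOp (ν+1))^[n+1] f x + (((n:ℝ)+1)/x) * (deltaOp (ν+1))^[n] f x := by
  induction n with
  | zero =>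
    intro x hx
    have hx0 : x ≠ 0 := ne_of_gt hx
    push_cast
    show deltaOp ν f x = deltaOp (ν+1) f x + (((0:ℝ)+1)/x) * f x
    unfold deltaOp
    field_simp
    ring
  | succ n ih =>
    intro x hx
    have hx0 : x ≠ 0 := ne_of_gt hx
    set g0 := (deltaOp (ν+1))^[n] f with hg0def
    set g1 := (deltaOp (ν+1))^[n+1] f with hg1def
    have diffAt : ∀ j : ℕ, DifferentiableAt ℝ ((deltaOp (ν+1))^[j] f) x := fun j =>
      ((iterSmooth (ν+1) hf j).differentiableOn (by simp)).differentiableAt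
        (isOpen_Ioi.mem_nhds hx)
    have hEq : (deltaOp ν)^[n+1] f =ᶠ[nhds x]
        (fun y => g1 y + (((n:ℝ)+1)/y) * g0 y) :=
      Filter.eventuallyEq_of_mem (isOpen_Ioi.mem_nhds hx) (fun y hy => ih y hy)
    have hc : HasDerivAt (fun y : ℝ => ((n:ℝ)+1)/y) (((n:ℝ)+1) * (-(x^2)⁻¹)) x := by
      simpa [div_eq_mul_inv] using (hasDerivAt_inv hx0).const_mul ((n:ℝ)+1)
    have hderivF : deriv ((deltaOp ν)^[n+1] f) x =
        deriv g1 x + ((((n:ℝ)+1) * (-(x^2)⁻¹)) * g0 x + (((n:ℝ)+1)/x) * deriv g0 x) := by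
      rw [hEq.deriv_eq]
      exact (((diffAt (n+1)).hasDerivAt).add
        (hc.mul ((diffAt n).hasDerivAt))).deriv
    have hg1 : g1 x = deriv g0 x + x * g0 x - ((ν+1+1/2)/x) * g0 x := by
      rw [hg1def, Function.iterate_succ_apply']; rfl
    rw [Function.iterate_succ_apply' (deltaOp ν) (n+1),
        Function.iterate_succ_apply' (deltaOp (ν+1)) (n+1)]
    show deltaOp ν ((deltaOp ν)^[n+1] f) x = deltaOp (ν+1) g1 x + _
    simp only [deltaOp]
    rw [hderivF, ih x hx, hg1]
    push_cast
    field_simp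
    ring

theorem stmt6 (ν : ℝ) (hν : -(1 / 2 : ℝ) < ν) (k : ℕ) (hk : 1 ≤ k)
    (f : ℝ → ℝ) (hf : ContDiffOn ℝ (⊤ : ℕ∞) f (Set.Ioi 0)) (x : ℝ) (hx : 0 < x) :
    (deltaOp ν)^[k] f x =
      (deltaOp (ν + 1))^[k] f x + ((k : ℝ) / x) * (deltaOp (ν + 1))^[k - 1] f x := by
  obtain ⟨n, rfl⟩ : ∃ n, k = n + 1 := ⟨k - 1, (Nat.succ_pred_eq_of_pos hk).symm⟩
  have := key ν f hf n x hx
  simpa [Nat.add_sub_cancel] using this
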